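/- Let Z be a real-valued random variable, 𝒢 a sub-σ-algebra, and D(Z) = ∫_ℝ E[(F_Z(t) − P(Z ≤ t | 𝒢))²] dF_Z(t) its Cramér–von Mises index with respect to 𝒢, where F_Z is the distribution function of Z and dF_Z denotes integration with respect to the law of Z. Then for every b ∈ ℝ and every λ > 0, D(λZ + b) = D(Z); if moreover F_Z is continuous, then D(λZ + b) = D(Z) for every λ ≠ 0. -/

import Mathlib

open MeasureTheory ProbabilityTheory Filter Topology

/-- **Invariance of the Cramér–von Mises index.** The Cramér–von Mises index
`D(Z) = ∫ E[(F_Z(t) − P(Z ≤ t | 𝒢))²] dF_Z(t)` is invariant under translation and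
under left-composition by a positive scaling, and, when the distribution function of
`Z` is continuous, under left-composition by any nonzero scaling. -/
theorem cramer_von_mises_index_invariance
    {Ω : Type*} (G : MeasurableSpace Ω) [m0 : MeasurableSpace Ω]
    (P : Measure Ω) [IsProbabilityMeasure P] (hG : G ≤ m0)
    (Z : Ω → ℝ) (hZ : Measurable Z)
    (D : (Ω → ℝ) → ℝ)
    (hD : ∀ W : Ω → ℝ, D W = ∫ t, (∫ ω, ((P {ω' | W ω' ≤ t}).toReal
        - (MeasureTheory.condExp G P
            (Set.indicator {ω' | W ω' ≤ t} fun _ => (1 : ℝ))) ω) ^ 2 ∂P)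
      ∂(Measure.map W P)) :
    (∀ b lam : ℝ, 0 < lam → D (fun ω => lam * Z ω + b) = D Z)
      ∧ (Continuous (fun t => (P {ω | Z ω ≤ t}).toReal) →
          ∀ b lam : ℝ, lam ≠ 0 → D (fun ω => lam * Z ω + b) = D Z) := by
  -- Change of variables: reduce to pointwise equality of inner integrals.
  have key : ∀ b lam : ℝ, lam ≠ 0 →
      (∀ s : ℝ,
        (∫ ω, ((P {ω' | lam * Z ω' + b ≤ lam * s + b}).toReal
          - (condExp G P (Set.indicator {ω' | lam * Z ω' + b ≤ lam * s + b}
              fun _ => (1:ℝ))) ω) ^ 2 ∂P)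
        = ∫ ω, ((P {ω' | Z ω' ≤ s}).toReal
          - (condExp G P (Set.indicator {ω' | Z ω' ≤ s} fun _ => (1:ℝ))) ω) ^ 2 ∂P) →
      D (fun ω => lam * Z ω + b) = D Z := by
    intro b lam hlam h
    have hA : Measurable (fun x : ℝ => lam * x + b) := by fun_prop
    have hemb : MeasurableEmbedding (fun x : ℝ => lam * x + b) := by
      have := ((Homeomorph.mulLeft₀ lam hlam).trans
        (Homeomorph.addRight b)).measurableEmbedding
      exact this
    have hmap : Measure.map (fun ω => lam * Z ω + b) P
        = Measure.map (fun x : ℝ => lam * x + b) (Measure.map Z P) := by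
      rw [Measure.map_map hA hZ]; rfl
    rw [hD, hD, hmap, hemb.integral_map]
    exact integral_congr_ae (Filter.Eventually.of_forall fun s => h s)
  have pos : ∀ b lam : ℝ, 0 < lam → D (fun ω => lam * Z ω + b) = D Z := by
    intro b lam hlam
    refine key b lam (ne_of_gt hlam) fun s => ?_
    have hset : {ω' | lam * Z ω' + b ≤ lam * s + b} = {ω' | Z ω' ≤ s} := by
      ext ω'; constructor <;> intro h <;> simp only [Set.mem_setOf_eq] at * <;> nlinarith
    rw [hset]
  refine ⟨pos, fun hF b lam hlam => ?_⟩
  rcases hlam.lt_or_gt with hneg | hpos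
  · -- negative scaling, using continuity of the CDF
    refine key b lam hlam fun s => ?_
    have hset : {ω' | lam * Z ω' + b ≤ lam * s + b} = {ω' | s ≤ Z ω'} := by
      ext ω'; constructor <;> intro h <;> simp only [Set.mem_setOf_eq] at * <;> nlinarith
    rw [hset]
    -- the CDF has no jumps: P {Z = s} = 0
    have hlt_eq : (P {ω | Z ω < s}).toReal = (P {ω | Z ω ≤ s}).toReal := by
      have hmono : Monotone (fun n : ℕ => {ω | Z ω ≤ s - 1/(n+1)}) := by
        intro m n hmn ω hω
        simp only [Set.mem_setOf_eq] at hω ⊢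
        have h1 : (1:ℝ)/(n+1) ≤ 1/(m+1) := by
          apply one_div_le_one_div_of_le
          · positivity
          · have := (Nat.cast_le (α := ℝ)).mpr hmn
            linarith
        linarith
      have hUnion : (⋃ n : ℕ, {ω | Z ω ≤ s - 1/(n+1)}) = {ω | Z ω < s} := by
        ext ω
        simp only [Set.mem_iUnion, Set.mem_setOf_eq]
        constructor
        · rintro ⟨n, hn⟩
          have : (0:ℝ) < 1/(n+1) := by positivity
          linarith
        · intro hω
          obtain ⟨n, hn⟩ := exists_nat_one_div_lt (sub_pos.mpr hω)
          exact ⟨n, by linarith⟩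
      have h1 : Tendsto (fun n : ℕ => P {ω | Z ω ≤ s - 1/(n+1)}) atTop
          (𝓝 (P {ω | Z ω < s})) := by
        rw [← hUnion]
        exact tendsto_measure_iUnion_atTop hmono
      have h1' : Tendsto (fun n : ℕ => (P {ω | Z ω ≤ s - 1/(n+1)}).toReal) atTop
          (𝓝 (P {ω | Z ω < s}).toReal) :=
        (ENNReal.tendsto_toReal (measure_ne_top P _)).comp h1
      have hsn : Tendsto (fun n : ℕ => s - 1/((n:ℝ)+1)) atTop (𝓝 s) := by
        have : Tendsto (fun n : ℕ => 1 / ((n:ℝ)+1)) atTop (𝓝 0) := tendsto_one_div_add_atTop_nhds_zero_nat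
        have := tendsto_const_nhds (x := s) (f := atTop (α := ℕ))
        simpa using Tendsto.sub (tendsto_const_nhds (x := s))
          tendsto_one_div_add_atTop_nhds_zero_nat
      have h2 : Tendsto (fun n : ℕ => (P {ω | Z ω ≤ s - 1/(n+1)}).toReal) atTop
          (𝓝 ((P {ω | Z ω ≤ s}).toReal)) := by
        have := (hF.tendsto s).comp hsn
        simpa [Function.comp_def] using this
      exact tendsto_nhds_unique h1' h2
    have hslt : MeasurableSet {ω | Z ω < s} := hZ measurableSet_Iio
    have hsle : MeasurableSet {ω' | Z ω' ≤ s} := hZ measurableSet_Iic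
    have hseq : MeasurableSet {ω | Z ω = s} := hZ (measurableSet_singleton s)
    have heq : P {ω | Z ω ≤ s} = P {ω | Z ω < s} + P {ω | Z ω = s} := by
      have hcup : {ω | Z ω ≤ s} = {ω | Z ω < s} ∪ {ω | Z ω = s} := by
        ext ω; simp only [Set.mem_union, Set.mem_setOf_eq]
        exact le_iff_lt_or_eq
      have hdis : Disjoint {ω | Z ω < s} {ω | Z ω = s} := by
        rw [Set.disjoint_left]
        intro ω h1 h2
        simp only [Set.mem_setOf_eq] at h1 h2
        exact absurd h2 (ne_of_lt h1)
      rw [hcup, measure_union hdis hseq]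
    have hatom : P {ω | Z ω = s} = 0 := by
      have htr : (P {ω | Z ω ≤ s}).toReal
          = (P {ω | Z ω < s}).toReal + (P {ω | Z ω = s}).toReal := by
        rw [heq, ENNReal.toReal_add (measure_ne_top P _) (measure_ne_top P _)]
      have : (P {ω | Z ω = s}).toReal = 0 := by linarith [hlt_eq, htr]
      exact (ENNReal.toReal_eq_zero_iff _).mp this |>.resolve_right (measure_ne_top P _)
    -- the value P {s ≤ Z}
    have hge_toReal : (P {ω' | s ≤ Z ω'}).toReal = 1 - (P {ω' | Z ω' ≤ s}).toReal := by
      have hcompl : {ω' | s ≤ Z ω'} = {ω | Z ω < s}ᶜ := by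
        ext ω; simp [not_lt]
      rw [hcompl, prob_compl_eq_one_sub hslt,
        ENNReal.toReal_sub_of_le prob_le_one ENNReal.one_ne_top, ENNReal.toReal_one, hlt_eq]
    -- conditional expectation identity
    set gle := Set.indicator {ω' | Z ω' ≤ s} (fun _ => (1:ℝ)) with hgle
    set gge := Set.indicator {ω' | s ≤ Z ω'} (fun _ => (1:ℝ)) with hgge
    have hne : ∀ᵐ ω ∂P, Z ω ≠ s := by
      rw [ae_iff]
      simpa using hatom
    have hae : gge =ᵐ[P] (fun _ => (1:ℝ)) - gle := by
      filter_upwards [hne] with ω hω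
      rcases lt_or_gt_of_ne hω with h | h
      · simp [hgge, hgle, Set.indicator_apply, Set.mem_setOf_eq, h.le, not_le.mpr h]
      · simp [hgge, hgle, Set.indicator_apply, Set.mem_setOf_eq, h.le, not_le.mpr h]
    have hcond : condExp G P gge =ᵐ[P] fun ω => 1 - condExp G P gle ω := by
      have h1 : condExp G P gge =ᵐ[P] condExp G P ((fun _ => (1:ℝ)) - gle) :=
        condExp_congr_ae hae
      have h2 : condExp G P ((fun _ => (1:ℝ)) - gle) =ᵐ[P]
          condExp G P (fun _ => (1:ℝ)) - condExp G P gle :=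
        condExp_sub (integrable_const 1) ((integrable_const (1:ℝ)).indicator hsle) G
      have h3 : condExp G P (fun _ : Ω => (1:ℝ)) = fun _ => 1 := condExp_const hG 1
      filter_upwards [h1, h2] with ω e1 e2
      rw [e1, e2, Pi.sub_apply, h3]
    refine integral_congr_ae ?_
    filter_upwards [hcond] with ω hω
    rw [hω, hge_toReal]
    ring
  · exact pos b lam hpos
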